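/- arXiv:1306.5578 — 2 statements merged into one kernel-verified Lean document; each statement's English description precedes it below -/
import Mathlib

section
/- For every integer m ≥ 3, the hypergraphs ℳ^m_1 and ℳ^m_2 (with vertex set E_m and edge sets ℳ^m_1, ℳ^m_2) are strongly hypomorphic with respect to vertex deletion: for every v ∈ E_m, the vertex-deleted hypergraph ℳ^m_1 − v = {S ∈ ℳ^m_1 : v ∉ S} over E_m ∖ {v} is isomorphic to ℳ^m_2 − v = {S ∈ ℳ^m_2 : v ∉ S} over E_m ∖ {v}. -/
section SetSystems

variable {α β : Type*}

/-- A family of finite sets is a Sperner system (an antichain under inclusion). -/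
def IsSperner [DecidableEq α] (F : Finset (Finset α)) : Prop :=
  ∀ S ∈ F, ∀ T ∈ F, S ⊆ T → S = T

/-- Isomorphism of set systems with the given ground sets: a bijection `σ` of the
ground set `A` onto the ground set `B` mapping the family `F` onto the family `G`. -/
def SystemIso [DecidableEq α] [DecidableEq β] (A : Finset α) (F : Finset (Finset α))
    (B : Finset β) (G : Finset (Finset β)) : Prop :=
  ∃ σ : α → β, Set.BijOn σ ↑A ↑B ∧ F.image (fun S => S.image σ) = G

/-- Identification of `v` with `u` inside a block: `S_I = (S ∖ {v}) ∪ {u}` if `v ∈ S`,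
and `S_I = S` otherwise. -/
def identifyBlock [DecidableEq α] (u v : α) (S : Finset α) : Finset α :=
  if v ∈ S then insert u (S.erase v) else S

/-- The identified system `𝒜_I` for `I = {u, v}` (with `u` the kept representative). -/
def identifySystem [DecidableEq α] (u v : α) (F : Finset (Finset α)) : Finset (Finset α) :=
  F.image (identifyBlock u v)

/-- The minimal members of a family with respect to inclusion. -/
def minimals [DecidableEq α] (F : Finset (Finset α)) : Finset (Finset α) :=
  F.filter (fun S => ∀ T ∈ F, T ⊆ S → T = S)

/-- `𝒜*_I`: the Sperner system of minimal members of the identified system. -/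
def starMinor [DecidableEq α] (u v : α) (F : Finset (Finset α)) : Finset (Finset α) :=
  minimals (identifySystem u v F)

/-- Strong hypomorphism: for every two-element subset `I = {u, v}` of the ground set `A`,
the systems `F*_I` and `G*_I` (both over `A ∖ {v}`) are isomorphic. -/
def StronglyHypomorphic [DecidableEq α] (A : Finset α) (F G : Finset (Finset α)) : Prop :=
  ∀ u ∈ A, ∀ v ∈ A, u ≠ v →
    SystemIso (A.erase v) (starMinor u v F) (A.erase v) (starMinor u v G)

/-- Hypomorphism: a bijection `φ` of the two-element subsets of the ground set `A`
such that `F*_I` is isomorphic to `G*_{φ I}` for every two-element subset `I`. -/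
def Hypomorphic [DecidableEq α] (A : Finset α) (F G : Finset (Finset α)) : Prop :=
  ∃ φ : {P : Finset α // P ∈ A.powersetCard 2} ≃ {P : Finset α // P ∈ A.powersetCard 2},
    ∀ (P : {P : Finset α // P ∈ A.powersetCard 2}) (u v u' v' : α),
      u ≠ v → (P : Finset α) = {u, v} → u' ≠ v' → ((φ P : Finset α)) = {u', v'} →
      SystemIso (A.erase v) (starMinor u v F) (A.erase v') (starMinor u' v' G)

end SetSystems

/-- The ground set `E_m`: two disjoint copies of `{1, …, m}` (modelled as `ZMod m`);
`Sum.inl i` is the unprimed element `i` and `Sum.inr i` is the primed element `i'`. -/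
abbrev Em (m : ℕ) := ZMod m ⊕ ZMod m

/-- `A^m_J = J ∪ ({1,…,m} ∖ J)'`. -/
def AJ (m : ℕ) [NeZero m] (J : Finset (ZMod m)) : Finset (Em m) :=
  J.image Sum.inl ∪ Jᶜ.image Sum.inr

/-- `G^m_1 = {A^m_J : J ⊆ {1,…,m}, |J| odd}`. -/
def G1 (m : ℕ) [NeZero m] : Finset (Finset (Em m)) :=
  ((Finset.univ : Finset (ZMod m)).powerset.filter fun J => Odd J.card).image (AJ m)

/-- `G^m_2 = {A^m_J : J ⊆ {1,…,m}, |J| even}`. -/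
def G2 (m : ℕ) [NeZero m] : Finset (Finset (Em m)) :=
  ((Finset.univ : Finset (ZMod m)).powerset.filter fun J => Even J.card).image (AJ m)

/-- `F^m_p = E_m ∖ {p, p', (p+1)'}`. -/
def Fblock (m : ℕ) [NeZero m] (p : ZMod m) : Finset (Em m) :=
  Finset.univ \ {Sum.inl p, Sum.inr p, Sum.inr (p + 1)}

/-- `F^m = {F^m_p : p ∈ {1,…,m}}`. -/
def Fsys (m : ℕ) [NeZero m] : Finset (Finset (Em m)) :=
  Finset.univ.image (Fblock m)

/-- `ℳ^m_1 = G^m_1 ∪ F^m`. -/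
def M1 (m : ℕ) [NeZero m] : Finset (Finset (Em m)) := G1 m ∪ Fsys m

/-- `ℳ^m_2 = G^m_2 ∪ F^m`. -/
def M2 (m : ℕ) [NeZero m] : Finset (Finset (Em m)) := G2 m ∪ Fsys m

section Aux

variable (m : ℕ) [NeZero m]

/-- The swap of the two copies of `q`. -/
def sw (q : ZMod m) : Em m → Em m
  | Sum.inl i => if i = q then Sum.inr q else Sum.inl i
  | Sum.inr i => if i = q then Sum.inl q else Sum.inr i

lemma sw_invol (q : ZMod m) : Function.Involutive (sw m q) := by
  intro x
  cases x with
  | inl i => by_cases h : i = q <;> simp [sw, h]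
  | inr i => by_cases h : i = q <;> simp [sw, h]

lemma mem_image_sw (q : ZMod m) (S : Finset (Em m)) (x : Em m) :
    x ∈ S.image (sw m q) ↔ sw m q x ∈ S := by
  simp only [Finset.mem_image]
  constructor
  · rintro ⟨y, hy, rfl⟩; rwa [sw_invol]
  · intro h; exact ⟨_, h, sw_invol m q x⟩

lemma inl_mem_AJ (J : Finset (ZMod m)) (i : ZMod m) : Sum.inl i ∈ AJ m J ↔ i ∈ J := by
  simp [AJ]

lemma inr_mem_AJ (J : Finset (ZMod m)) (i : ZMod m) : Sum.inr i ∈ AJ m J ↔ i ∉ J := by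
  simp [AJ]

/-- Toggle membership of `q` in `J`. -/
def tog (q : ZMod m) (J : Finset (ZMod m)) : Finset (ZMod m) :=
  if q ∈ J then J.erase q else insert q J

lemma mem_tog (q : ZMod m) (J : Finset (ZMod m)) (i : ZMod m) :
    i ∈ tog m q J ↔ if i = q then q ∉ J else i ∈ J := by
  unfold tog
  by_cases hi : i = q
  · subst hi
    by_cases h : i ∈ J <;> simp [h]
  · by_cases h : q ∈ J <;> simp [h, hi]

lemma tog_tog (q : ZMod m) (J : Finset (ZMod m)) : tog m q (tog m q J) = J := by
  ext i
  by_cases hi : i = q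
  · subst hi; simp [mem_tog]
  · simp [mem_tog, hi]

lemma even_tog (q : ZMod m) (J : Finset (ZMod m)) :
    Even (tog m q J).card ↔ Odd J.card := by
  unfold tog
  by_cases h : q ∈ J
  · rw [if_pos h, Finset.card_erase_of_mem h]
    have h1 : 1 ≤ J.card := Finset.card_pos.mpr ⟨q, h⟩
    rw [Nat.even_sub h1]
    rcases Nat.even_or_odd J.card with he | ho
    · simp [he, Nat.not_odd_iff_even.mpr he]
    · simp [ho, Nat.not_even_iff_odd.mpr ho]
  · rw [if_neg h, Finset.card_insert_of_notMem h, Nat.even_add_one, ← Nat.not_even_iff_odd]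

lemma odd_tog (q : ZMod m) (J : Finset (ZMod m)) :
    Odd (tog m q J).card ↔ Even J.card := by
  rw [← Nat.not_even_iff_odd, even_tog, ← Nat.not_even_iff_odd, not_not]

lemma image_AJ (q : ZMod m) (J : Finset (ZMod m)) :
    (AJ m J).image (sw m q) = AJ m (tog m q J) := by
  ext x
  rw [mem_image_sw]
  cases x with
  | inl i =>
    by_cases hi : i = q
    · subst hi
      simp [sw, inl_mem_AJ, inr_mem_AJ, mem_tog]
    · simp [sw, hi, inl_mem_AJ, mem_tog]
  | inr i =>
    by_cases hi : i = q
    · subst hi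
      simp [sw, inl_mem_AJ, inr_mem_AJ, mem_tog]
    · simp [sw, hi, inr_mem_AJ, mem_tog]

lemma mem_Fblock (r : ZMod m) (x : Em m) :
    x ∈ Fblock m r ↔ ¬(x = Sum.inl r ∨ x = Sum.inr r ∨ x = Sum.inr (r + 1)) := by
  simp [Fblock]

lemma image_Fblock (q r : ZMod m) (hq : q ≠ r + 1) :
    (Fblock m r).image (sw m q) = Fblock m r := by
  ext x
  rw [mem_image_sw, mem_Fblock, mem_Fblock]
  cases x with
  | inl i =>
    by_cases hi : i = q
    · subst hi; simp [sw, hq]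
    · simp [sw, hi]
  | inr i =>
    by_cases hi : i = q
    · subst hi; simp [sw, hq]
    · simp [sw, hi]

lemma mem_G1 (S : Finset (Em m)) : S ∈ G1 m ↔ ∃ J, Odd J.card ∧ AJ m J = S := by
  simp [G1]

lemma mem_G2 (S : Finset (Em m)) : S ∈ G2 m ↔ ∃ J, Even J.card ∧ AJ m J = S := by
  simp [G2]

lemma mem_Fsys (S : Finset (Em m)) : S ∈ Fsys m ↔ ∃ r, Fblock m r = S := by
  simp [Fsys]

end Aux

/-- For every integer `m ≥ 3`, the hypergraphs `ℳ^m_1` and `ℳ^m_2` (with vertex set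
`E_m`) are strongly hypomorphic with respect to vertex deletion: for every `v ∈ E_m`,
the vertex-deleted hypergraph `ℳ^m_1 − v = {S ∈ ℳ^m_1 : v ∉ S}` over `E_m ∖ {v}` is
isomorphic to `ℳ^m_2 − v` over `E_m ∖ {v}`. -/
theorem statement6 (m : ℕ) (hm : 3 ≤ m) :
    letI : NeZero m := ⟨by omega⟩
    ∀ v : Em m,
      SystemIso ((Finset.univ : Finset (Em m)).erase v)
        ((M1 m).filter (fun S => v ∉ S))
        ((Finset.univ : Finset (Em m)).erase v)
        ((M2 m).filter (fun S => v ∉ S)) := by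
  haveI : NeZero m := ⟨by omega⟩
  intro v
  obtain ⟨p, hv⟩ : ∃ p, v = Sum.inl p ∨ v = Sum.inr p := by
    cases v with
    | inl p => exact ⟨p, Or.inl rfl⟩
    | inr p => exact ⟨p, Or.inr rfl⟩
  have h1 : (1 : ZMod m) ≠ 0 := by
    intro h
    have : ((1 : ℕ) : ZMod m) = 0 := by exact_mod_cast h
    rw [ZMod.natCast_eq_zero_iff] at this
    have := Nat.le_of_dvd one_pos this
    omega
  have h2 : (2 : ZMod m) ≠ 0 := by
    intro h
    have : ((2 : ℕ) : ZMod m) = 0 := by exact_mod_cast h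
    rw [ZMod.natCast_eq_zero_iff] at this
    have := Nat.le_of_dvd (by norm_num) this
    omega
  set q : ZMod m := p - 1 with hq
  have hqp : q ≠ p := by
    intro h
    rw [hq] at h
    apply h1
    linear_combination -h
  have hswv : sw m q v = v := by
    rcases hv with rfl | rfl <;> simp [sw, Ne.symm hqp]
  -- `v`-membership in `AJ` is invariant under toggling `q`
  have hvAJ : ∀ J, v ∈ AJ m (tog m q J) ↔ v ∈ AJ m J := by
    intro J
    rcases hv with rfl | rfl <;>
      simp [inl_mem_AJ, inr_mem_AJ, mem_tog, Ne.symm hqp]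
  -- `q ≠ r + 1` for every relevant `F`-block
  have hvF : ∀ r : ZMod m, v ∉ Fblock m r → q ≠ r + 1 := by
    intro r hr
    rw [mem_Fblock, not_not] at hr
    rcases hv with rfl | rfl
    · rcases hr with h | h | h
      · have hpr : p = r := by simpa using h
        intro hcon
        rw [hq, hpr] at hcon
        apply h2
        linear_combination -hcon
      · simp at h
      · simp at h
    · rcases hr with h | h | h
      · simp at h
      · have hpr : p = r := by simpa using h
        intro hcon
        rw [hq, hpr] at hcon
        apply h2
        linear_combination -hcon
      · have hpr : p = r + 1 := by simpa using h
        intro hcon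
        rw [hq] at hcon
        apply h1
        linear_combination hpr - hcon
  refine ⟨sw m q, ?_, ?_⟩
  · -- bijection of the punctured ground set
    have hmem : ∀ x : Em m, x ∈ ((Finset.univ : Finset (Em m)).erase v : Set (Em m)) ↔ x ≠ v := by
      intro x; simp
    refine ⟨?_, ?_, ?_⟩
    · intro x hx
      rw [hmem] at hx ⊢
      intro h
      apply hx
      have := congrArg (sw m q) h
      rwa [sw_invol, hswv] at this
    · exact (sw_invol m q).injective.injOn
    · intro y hy
      rw [hmem] at hy
      refine ⟨sw m q y, ?_, sw_invol m q y⟩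
      rw [hmem]
      intro h
      apply hy
      have := congrArg (sw m q) h
      rwa [sw_invol, hswv] at this
  · -- the image equality
    have hG : ((G1 m).filter (fun S => v ∉ S)).image (fun S => S.image (sw m q))
        = (G2 m).filter (fun S => v ∉ S) := by
      ext S
      simp only [Finset.mem_image, Finset.mem_filter, mem_G1, mem_G2]
      constructor
      · rintro ⟨T, ⟨⟨J, hodd, rfl⟩, hvT⟩, rfl⟩
        refine ⟨⟨tog m q J, (even_tog m q J).mpr hodd, (image_AJ m q J).symm⟩, ?_⟩
        rw [image_AJ]
        intro h
        exact hvT ((hvAJ J).mp h)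
      · rintro ⟨⟨K, heven, rfl⟩, hvS⟩
        refine ⟨AJ m (tog m q K), ⟨⟨tog m q K, (odd_tog m q K).mpr heven, rfl⟩, ?_⟩, ?_⟩
        · intro h
          exact hvS ((hvAJ K).mp h)
        · rw [image_AJ, tog_tog]
    have hF : ((Fsys m).filter (fun S => v ∉ S)).image (fun S => S.image (sw m q))
        = (Fsys m).filter (fun S => v ∉ S) := by
      ext S
      simp only [Finset.mem_image, Finset.mem_filter, mem_Fsys]
      constructor
      · rintro ⟨T, ⟨⟨r, rfl⟩, hvT⟩, rfl⟩
        rw [image_Fblock m q r (hvF r hvT)]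
        exact ⟨⟨r, rfl⟩, hvT⟩
      · rintro ⟨⟨r, rfl⟩, hvS⟩
        exact ⟨Fblock m r, ⟨⟨r, rfl⟩, hvS⟩, image_Fblock m q r (hvF r hvS)⟩
    show ((M1 m).filter (fun S => v ∉ S)).image (fun S => S.image (sw m q))
        = (M2 m).filter (fun S => v ∉ S)
    rw [M1, M2, Finset.filter_union, Finset.filter_union, Finset.image_union, hG, hF]
end

section
/- Let n ≥ 4 and let 𝒜 be a Sperner system over {1,…,n} such that either every block of 𝒜 is a singleton (𝒜 is 1-homogeneous) or 𝒜 has exactly one block. Then 𝒜 is reconstructible: every Sperner system ℬ over {1,…,n} that is hypomorphic to 𝒜 is isomorphic to 𝒜. -/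
section Lemmas
variable {α : Type*} [DecidableEq α]

lemma mem_minimals' {F : Finset (Finset α)} {S : Finset α} :
    S ∈ minimals F ↔ S ∈ F ∧ ∀ T ∈ F, T ⊆ S → T = S := by
  simp [minimals, Finset.mem_filter]

lemma minimals_self {F : Finset (Finset α)} (h : IsSperner F) : minimals F = F := by
  ext S
  simp only [mem_minimals', and_iff_left_iff_imp]
  exact fun hS T hT hTS => h T hT S hS hTS

lemma minimals_nonempty {F : Finset (Finset α)} (h : F.Nonempty) : (minimals F).Nonempty := by
  obtain ⟨m, hm, hmin⟩ : ∃ m ∈ F, ∀ x ∈ F, ¬x < m := by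
    obtain ⟨m, hm, hmin⟩ := Finset.exists_minimal h
    exact ⟨m, hm, fun x hx hlt => hlt.not_ge (hmin hx hlt.le)⟩
  exact ⟨m, mem_minimals'.2 ⟨hm, fun T hT hTS => by
    by_contra hne
    exact hmin T hT (lt_of_le_of_ne hTS hne)⟩⟩

lemma min_subset_of_minimals_eq {F : Finset (Finset α)} {M : Finset α}
    (h : minimals F = {M}) : ∀ X ∈ F, M ⊆ X := by
  intro X hX
  have h1 : (minimals (F.filter (· ⊆ X))).Nonempty :=
    minimals_nonempty ⟨X, Finset.mem_filter.2 ⟨hX, le_refl X⟩⟩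
  obtain ⟨M', hM'⟩ := h1
  rw [mem_minimals'] at hM'
  obtain ⟨hM'mem, hM'min⟩ := hM'
  rw [Finset.mem_filter] at hM'mem
  have : M' ∈ minimals F := by
    rw [mem_minimals']
    refine ⟨hM'mem.1, fun T hT hTS => ?_⟩
    exact hM'min T (Finset.mem_filter.2 ⟨hT, hTS.trans hM'mem.2⟩) hTS
  rw [h, Finset.mem_singleton] at this
  rw [← this]
  exact hM'mem.2

lemma identifyBlock_card {u v : α} (huv : u ≠ v) (S : Finset α) :
    (identifyBlock u v S).card = if u ∈ S ∧ v ∈ S then S.card - 1 else S.card := by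
  unfold identifyBlock
  by_cases hv : v ∈ S
  · by_cases hu : u ∈ S
    · rw [if_pos hv, if_pos ⟨hu, hv⟩, Finset.insert_eq_self.2 (Finset.mem_erase.2 ⟨huv, hu⟩),
        Finset.card_erase_of_mem hv]
    · rw [if_pos hv, if_neg (fun h => hu h.1),
        Finset.card_insert_of_notMem (fun h => hu (Finset.mem_of_mem_erase h)),
        Finset.card_erase_of_mem hv]
      have := Finset.card_pos.2 ⟨v, hv⟩
      omega
  · rw [if_neg hv, if_neg (fun h => hv h.2)]

lemma not_mem_identifyBlock {u v : α} (huv : u ≠ v) (S : Finset α) :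
    v ∉ identifyBlock u v S := by
  unfold identifyBlock
  by_cases hv : v ∈ S
  · rw [if_pos hv]
    simp [Ne.symm huv]
  · rw [if_neg hv]; exact hv

lemma identifyBlock_singleton (u v a : α) :
    identifyBlock u v {a} = {if a = v then u else a} := by
  unfold identifyBlock
  by_cases h : a = v
  · subst h; simp
  · simp [show ¬ v = a from fun h' => h h'.symm, h]

lemma image_collapse_eq (u v : α) (W : Finset α) :
    W.image (fun a => if a = v then u else a) = identifyBlock u v W := by
  unfold identifyBlock
  by_cases hv : v ∈ W
  · rw [if_pos hv]
    ext x
    simp only [Finset.mem_image, Finset.mem_insert, Finset.mem_erase]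
    constructor
    · rintro ⟨a, ha, rfl⟩
      by_cases h : a = v
      · simp [h]
      · simp [h, ha]
    · rintro (rfl | ⟨hxv, hx⟩)
      · refine ⟨v, hv, by simp⟩
      · exact ⟨x, hx, by simp [hxv]⟩
  · rw [if_neg hv]
    have : ∀ a ∈ W, (if a = v then u else a) = a := by
      intro a ha
      rw [if_neg]
      rintro rfl; exact hv ha
    rw [Finset.image_congr (fun a ha => this a ha)]
    simp

end Lemmas

section Lemmas2
variable {α β : Type*} [DecidableEq α] [DecidableEq β]

lemma sperner_singletons (W : Finset α) :
    IsSperner (W.image (fun a => ({a} : Finset α))) := by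
  intro S hS T hT hST
  simp only [Finset.mem_image] at hS hT
  obtain ⟨a, _, rfl⟩ := hS
  obtain ⟨b, _, rfl⟩ := hT
  have := hST (Finset.mem_singleton_self a)
  rw [Finset.mem_singleton] at this
  rw [this]

lemma starMinor_singletons {u v : α} (W : Finset α) :
    starMinor u v (W.image (fun a => ({a} : Finset α)))
      = (identifyBlock u v W).image (fun a => ({a} : Finset α)) := by
  have h1 : identifySystem u v (W.image (fun a => ({a} : Finset α)))
      = (identifyBlock u v W).image (fun a => ({a} : Finset α)) := by
    unfold identifySystem
    rw [Finset.image_image, ← image_collapse_eq u v W, Finset.image_image]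
    apply Finset.image_congr
    intro a _
    exact identifyBlock_singleton u v a
  rw [starMinor, h1, minimals_self (sperner_singletons _)]

lemma sperner_single (S : Finset α) : IsSperner ({S} : Finset (Finset α)) := by
  intro X hX Y hY _
  rw [Finset.mem_singleton] at hX hY
  rw [hX, hY]

lemma starMinor_single (u v : α) (S : Finset α) :
    starMinor u v ({S} : Finset (Finset α)) = {identifyBlock u v S} := by
  have : identifySystem u v ({S} : Finset (Finset α)) = {identifyBlock u v S} := by
    unfold identifySystem
    rw [Finset.image_singleton]
  rw [starMinor, this, minimals_self (sperner_single _)]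

lemma starMinor_subset_ground {u v : α} (huv : u ≠ v) {F : Finset (Finset α)}
    [Fintype α] : ∀ S ∈ starMinor u v F, S ⊆ (Finset.univ : Finset α).erase v := by
  intro S hS
  rw [starMinor, mem_minimals'] at hS
  obtain ⟨hS, -⟩ := hS
  rw [identifySystem, Finset.mem_image] at hS
  obtain ⟨M, -, rfl⟩ := hS
  intro x hx
  rw [Finset.mem_erase]
  exact ⟨fun h => not_mem_identifyBlock huv M (h ▸ hx), Finset.mem_univ x⟩

lemma iso_family_card {A : Finset α} {B : Finset β} {F : Finset (Finset α)}
    {G : Finset (Finset β)} (h : SystemIso A F B G) (hF : ∀ S ∈ F, S ⊆ A) :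
    G.card = F.card := by
  obtain ⟨σ, hbij, rfl⟩ := h
  apply Finset.card_image_of_injOn
  intro S hS T hT him
  simp only at him
  apply Finset.Subset.antisymm
  · intro x hx
    have : σ x ∈ T.image σ := by
      rw [← him]; exact Finset.mem_image_of_mem σ hx
    rw [Finset.mem_image] at this
    obtain ⟨y, hy, hxy⟩ := this
    have : y = x := hbij.injOn (hF T hT hy) (hF S hS hx) hxy
    exact this ▸ hy
  · intro x hx
    have : σ x ∈ S.image σ := by
      rw [him]; exact Finset.mem_image_of_mem σ hx
    rw [Finset.mem_image] at this
    obtain ⟨y, hy, hxy⟩ := this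
    have : y = x := hbij.injOn (hF S hS hy) (hF T hT hx) hxy
    exact this ▸ hy

lemma iso_block_card {A : Finset α} {B : Finset β} {F : Finset (Finset α)}
    {G : Finset (Finset β)} (h : SystemIso A F B G) (hF : ∀ S ∈ F, S ⊆ A) :
    ∀ T ∈ G, ∃ S ∈ F, T.card = S.card := by
  obtain ⟨σ, hbij, rfl⟩ := h
  intro T hT
  rw [Finset.mem_image] at hT
  obtain ⟨S, hS, rfl⟩ := hT
  exact ⟨S, hS, Finset.card_image_of_injOn (hbij.injOn.mono (by exact_mod_cast hF S hS))⟩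

end Lemmas2

section Hypo
variable {α : Type*} [DecidableEq α] [Fintype α]


lemma pair_mem_powersetCard {u v : α} (huv : u ≠ v) :
    ({u, v} : Finset α) ∈ (Finset.univ : Finset α).powersetCard 2 := by
  rw [Finset.mem_powersetCard]
  exact ⟨Finset.subset_univ _, Finset.card_pair huv⟩

lemma hypo_forward {F G : Finset (Finset α)}
    (h : Hypomorphic (Finset.univ : Finset α) F G) :
    ∀ u v : α, u ≠ v → ∃ u' v', u' ≠ v' ∧
      SystemIso ((Finset.univ : Finset α).erase v) (starMinor u v F)
        ((Finset.univ : Finset α).erase v') (starMinor u' v' G) := by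
  obtain ⟨φ, hφ⟩ := h
  intro u v huv
  set P : {P : Finset α // P ∈ (Finset.univ : Finset α).powersetCard 2} :=
    ⟨{u, v}, pair_mem_powersetCard huv⟩ with hP
  have hcard : ((φ P : Finset α)).card = 2 := (Finset.mem_powersetCard.1 (φ P).2).2
  obtain ⟨u', v', hu'v', hval⟩ := Finset.card_eq_two.1 hcard
  exact ⟨u', v', hu'v', hφ P u v u' v' huv rfl hu'v' hval⟩

lemma hypo_backward {F G : Finset (Finset α)}
    (h : Hypomorphic (Finset.univ : Finset α) F G) :
    ∀ u' v' : α, u' ≠ v' → ∃ u v, u ≠ v ∧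
      SystemIso ((Finset.univ : Finset α).erase v) (starMinor u v F)
        ((Finset.univ : Finset α).erase v') (starMinor u' v' G) := by
  obtain ⟨φ, hφ⟩ := h
  intro u' v' hu'v'
  set Q : {P : Finset α // P ∈ (Finset.univ : Finset α).powersetCard 2} :=
    ⟨{u', v'}, pair_mem_powersetCard hu'v'⟩ with hQ
  set P := φ.symm Q with hPdef
  have hcard : ((P : Finset α)).card = 2 := (Finset.mem_powersetCard.1 P.2).2
  obtain ⟨u, v, huv, hval⟩ := Finset.card_eq_two.1 hcard
  have hφP : ((φ P : Finset α)) = {u', v'} := by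
    rw [hPdef, Equiv.apply_symm_apply]
  exact ⟨u, v, huv, hφ P u v u' v' huv hval hu'v' hφP⟩

end Hypo

section Counting
variable {n : ℕ}

/-- The size of the identified block, as a function of memberships. -/
def idc (X : Finset (Fin n)) (u v : Fin n) : ℕ :=
  if u ∈ X ∧ v ∈ X then X.card - 1 else X.card

lemma idc_eq_card_identifyBlock {u v : Fin n} (huv : u ≠ v) (X : Finset (Fin n)) :
    (identifyBlock u v X).card = idc X u v := identifyBlock_card huv X

lemma idc_le (X : Finset (Fin n)) (u v : Fin n) : idc X u v ≤ X.card := by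
  unfold idc; split <;> omega

lemma exists_pair_not_both {X : Finset (Fin n)} (hn : 4 ≤ n) (hX : X.card < n) :
    ∃ u v : Fin n, u ≠ v ∧ idc X u v = X.card := by
  have hcompl : (Xᶜ : Finset (Fin n)).Nonempty := by
    rw [← Finset.card_pos, Finset.card_compl]
    simp only [Fintype.card_fin]
    omega
  obtain ⟨v, hv⟩ := hcompl
  rw [Finset.mem_compl] at hv
  obtain ⟨u, hu⟩ := Fintype.exists_ne_of_one_lt_card (by simp [Fintype.card_fin]; omega) v
  exact ⟨u, v, hu, if_neg (fun h => hv h.2)⟩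

lemma exists_pair_both {X : Finset (Fin n)} (hX : 2 ≤ X.card) :
    ∃ u v : Fin n, u ≠ v ∧ idc X u v = X.card - 1 := by
  obtain ⟨u, hu, v, hv, huv⟩ := Finset.one_lt_card.1 hX
  exact ⟨u, v, huv, if_pos ⟨hu, hv⟩⟩

lemma aux_le {S T : Finset (Fin n)} (hn : 4 ≤ n)
    (h1 : ∀ u v : Fin n, u ≠ v → ∃ u' v', u' ≠ v' ∧ idc S u v = idc T u' v')
    (h2 : ∀ u' v' : Fin n, u' ≠ v' → ∃ u v, u ≠ v ∧ idc S u v = idc T u' v') :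
    S.card ≤ T.card := by
  by_contra hlt
  push_neg at hlt
  have hSn : S.card ≤ n := by
    have := Finset.card_le_univ S
    simpa using this
  by_cases hs : S.card < n
  · obtain ⟨u, v, huv, hval⟩ := exists_pair_not_both hn hs
    obtain ⟨u', v', -, heq⟩ := h1 u v huv
    have := idc_le T u' v'
    omega
  · -- S.card = n, so S = univ and every idc S equals n - 1
    have hScard : S.card = n := by omega
    have hSuniv : S = Finset.univ := by
      apply Finset.eq_univ_of_card
      simpa using hScard
    have hidcS : ∀ u v : Fin n, u ≠ v → idc S u v = n - 1 := by
      intro u v _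
      rw [hSuniv]
      simp only [idc, Finset.mem_univ, and_self, if_pos, Finset.card_univ, Fintype.card_fin]
    -- T.card < n
    have hTn : T.card < n := by omega
    obtain ⟨u', v', hu'v', hval⟩ := exists_pair_not_both hn hTn
    obtain ⟨u, v, huv, heq⟩ := h2 u' v' hu'v'
    have hT : T.card = n - 1 := by rw [hidcS u v huv] at heq; omega
    have : 2 ≤ T.card := by omega
    obtain ⟨u'', v'', hu''v'', hval2⟩ := exists_pair_both this
    obtain ⟨u3, v3, hu3v3, heq2⟩ := h2 u'' v'' hu''v''
    rw [hidcS u3 v3 hu3v3, hval2] at heq2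
    omega

lemma aux_eq {S T : Finset (Fin n)} (hn : 4 ≤ n)
    (h1 : ∀ u v : Fin n, u ≠ v → ∃ u' v', u' ≠ v' ∧ idc S u v = idc T u' v')
    (h2 : ∀ u' v' : Fin n, u' ≠ v' → ∃ u v, u ≠ v ∧ idc S u v = idc T u' v') :
    S.card = T.card := by
  have hle := aux_le hn h1 h2
  have h1' : ∀ u v : Fin n, u ≠ v → ∃ u' v', u' ≠ v' ∧ idc T u v = idc S u' v' := by
    intro u v huv
    obtain ⟨u', v', h', heq⟩ := h2 u v huv
    exact ⟨u', v', h', heq.symm⟩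
  have h2' : ∀ u' v' : Fin n, u' ≠ v' → ∃ u v, u ≠ v ∧ idc T u v = idc S u' v' := by
    intro u v huv
    obtain ⟨u', v', h', heq⟩ := h1 u v huv
    exact ⟨u', v', h', heq.symm⟩
  exact le_antisymm hle (aux_le hn h1' h2')

end Counting

section StructureB
variable {n : ℕ}

lemma structureB {G : Finset (Finset (Fin n))} (hn : 4 ≤ n) (hG : IsSperner G)
    (hdeck : ∀ u v : Fin n, u ≠ v → ∀ B ∈ starMinor u v G, B.card = 1) :
    ∀ B ∈ G, B.card = 1 := by
  intro B hB
  by_contra hcard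
  by_cases hsmall : B.card + 2 ≤ n
  · -- pick u ≠ v outside B
    have hcompl : 1 < (Bᶜ : Finset (Fin n)).card := by
      rw [Finset.card_compl]
      simp only [Fintype.card_fin]
      omega
    obtain ⟨u, hu, v, hv, huv⟩ := Finset.one_lt_card.1 hcompl
    rw [Finset.mem_compl] at hu hv
    have hBI : identifyBlock u v B = B := if_neg hv
    have hmem : B ∈ starMinor u v G := by
      rw [starMinor, mem_minimals']
      constructor
      · rw [identifySystem, Finset.mem_image]
        exact ⟨B, hB, hBI⟩
      · intro M' hM' hM'B
        rw [identifySystem, Finset.mem_image] at hM'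
        obtain ⟨M, hM, rfl⟩ := hM'
        by_cases hvm : v ∈ M
        · exfalso
          apply hu
          apply hM'B
          rw [identifyBlock, if_pos hvm]
          exact Finset.mem_insert_self u _
        · rw [identifyBlock, if_neg hvm] at hM'B ⊢
          exact hG M hM B hB hM'B
    exact hcard (hdeck u v huv B hmem)
  · -- B.card ≥ n - 1 ≥ 3; pick u ≠ v in B
    have hbig : 2 ≤ B.card := by omega
    obtain ⟨u, hu, v, hv, huv⟩ := Finset.one_lt_card.1 hbig
    have hBI : identifyBlock u v B = B.erase v := by
      rw [identifyBlock, if_pos hv, Finset.insert_eq_self.2 (Finset.mem_erase.2 ⟨huv, hu⟩)]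
    have hmem : B.erase v ∈ starMinor u v G := by
      rw [starMinor, mem_minimals']
      constructor
      · rw [identifySystem, Finset.mem_image]
        exact ⟨B, hB, hBI⟩
      · intro M' hM' hM'B
        rw [identifySystem, Finset.mem_image] at hM'
        obtain ⟨M, hM, rfl⟩ := hM'
        by_cases hvm : v ∈ M
        · have hMB : M ⊆ B := by
            intro x hx
            by_cases hxv : x = v
            · exact hxv ▸ hv
            · have : x ∈ identifyBlock u v M := by
                rw [identifyBlock, if_pos hvm]
                exact Finset.mem_insert_of_mem (Finset.mem_erase.2 ⟨hxv, hx⟩)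
              exact Finset.mem_of_mem_erase (hM'B this)
          have : M = B := hG M hM B hB hMB
          rw [this, hBI]
        · rw [identifyBlock, if_neg hvm] at hM'B ⊢
          have hMB : M ⊆ B := hM'B.trans (Finset.erase_subset v B)
          have : M = B := hG M hM B hB hMB
          exfalso
          rw [this] at hM'B
          exact (Finset.notMem_erase v B) (hM'B hv)
    have := hdeck u v huv _ hmem
    rw [Finset.card_erase_of_mem hv] at this
    omega

end StructureB

section BadPair
variable {n : ℕ}

/-- The "no minimum" predicate for a pair `(u,v)` and two witnesses `S, T`. -/
def NoMin (G : Finset (Finset (Fin n))) (S T : Finset (Fin n)) (u v : Fin n) : Prop :=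
  ∀ M ∈ G, ¬(identifyBlock u v M ⊆ identifyBlock u v S ∧
      identifyBlock u v M ⊆ identifyBlock u v T)

lemma noMin_symm {G : Finset (Finset (Fin n))} {S T : Finset (Fin n)} {u v : Fin n}
    (h : NoMin G S T u v) : NoMin G T S u v :=
  fun M hM hc => h M hM ⟨hc.2, hc.1⟩

/-- Case: some element of `S ∩ T`, and two elements of `S \ T`. -/
lemma badpair_two_diff {G : Finset (Finset (Fin n))} (hG : IsSperner G)
    {S T : Finset (Fin n)} (hS : S ∈ G) (hT : T ∈ G) {x a a' : Fin n}
    (hxS : x ∈ S) (hxT : x ∈ T) (haS : a ∈ S) (haT : a ∉ T)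
    (ha'S : a' ∈ S) (ha'T : a' ∉ T) (haa' : a ≠ a') :
    ∃ u v : Fin n, u ≠ v ∧ NoMin G S T u v := by
  have hax : a ≠ x := fun h => haT (h ▸ hxT)
  have ha'x : a' ≠ x := fun h => ha'T (h ▸ hxT)
  refine ⟨a, x, hax, ?_⟩
  have hIS : identifyBlock a x S = S.erase x := by
    rw [identifyBlock, if_pos hxS, Finset.insert_eq_self.2 (Finset.mem_erase.2 ⟨hax, haS⟩)]
  have hIT : identifyBlock a x T = insert a (T.erase x) := by
    rw [identifyBlock, if_pos hxT]
  intro M hM ⟨h1, h2⟩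
  rw [hIS] at h1
  rw [hIT] at h2
  by_cases hxM : x ∈ M
  · have hMS : M ⊆ S := by
      intro y hy
      by_cases hyx : y = x
      · exact hyx ▸ hxS
      · have : y ∈ identifyBlock a x M := by
          rw [identifyBlock, if_pos hxM]
          exact Finset.mem_insert_of_mem (Finset.mem_erase.2 ⟨hyx, hy⟩)
        exact Finset.mem_of_mem_erase (h1 this)
    have hMeq : M = S := hG M hM S hS hMS
    subst hMeq
    have ha'mem : a' ∈ identifyBlock a x M := by
      rw [identifyBlock, if_pos hxM]
      exact Finset.mem_insert_of_mem (Finset.mem_erase.2 ⟨ha'x, ha'S⟩)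
    have := h2 ha'mem
    rw [Finset.mem_insert] at this
    rcases this with h | h
    · exact haa' h.symm
    · exact ha'T (Finset.mem_of_mem_erase h)
  · rw [identifyBlock, if_neg hxM] at h1
    have hMS : M ⊆ S := h1.trans (Finset.erase_subset x S)
    have hMeq : M = S := hG M hM S hS hMS
    rw [hMeq] at h1
    exact (Finset.notMem_erase x S) (h1 hxS)

/-- Case: `S` and `T` disjoint, `S` has at least two elements. -/
lemma badpair_disj {G : Finset (Finset (Fin n))} (hG : IsSperner G)
    {S T : Finset (Fin n)} (hS : S ∈ G) (hT : T ∈ G) (hne : ∅ ∉ G)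
    (disj : ∀ x : Fin n, ¬(x ∈ S ∧ x ∈ T)) (h2 : 2 ≤ S.card) :
    ∃ u v : Fin n, u ≠ v ∧ NoMin G S T u v := by
  obtain ⟨u, hu, v, hv, huv⟩ := Finset.one_lt_card.1 h2
  refine ⟨u, v, huv, ?_⟩
  have hvT : v ∉ T := fun h => disj v ⟨hv, h⟩
  have hIS : identifyBlock u v S = S.erase v := by
    rw [identifyBlock, if_pos hv, Finset.insert_eq_self.2 (Finset.mem_erase.2 ⟨huv, hu⟩)]
  have hIT : identifyBlock u v T = T := if_neg hvT
  intro M hM ⟨h1, h2'⟩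
  rw [hIS] at h1
  rw [hIT] at h2'
  by_cases hvM : v ∈ M
  · have humem : u ∈ identifyBlock u v M := by
      rw [identifyBlock, if_pos hvM]; exact Finset.mem_insert_self u _
    exact disj u ⟨Finset.mem_of_mem_erase (h1 humem), h2' humem⟩
  · rw [identifyBlock, if_neg hvM] at h1 h2'
    have : M = ∅ := by
      rw [Finset.eq_empty_iff_forall_notMem]
      intro y hy
      exact disj y ⟨Finset.mem_of_mem_erase (h1 hy), h2' hy⟩
    exact hne (this ▸ hM)

lemma badpair {G : Finset (Finset (Fin n))} (hn : 4 ≤ n) (hG : IsSperner G)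
    {S T : Finset (Fin n)} (hS : S ∈ G) (hT : T ∈ G) (hST : S ≠ T) (hne : ∅ ∉ G) :
    ∃ u v : Fin n, u ≠ v ∧ NoMin G S T u v := by
  have hnST : ¬S ⊆ T := fun h => hST (hG S hS T hT h)
  have hnTS : ¬T ⊆ S := fun h => hST (hG T hT S hS h).symm
  obtain ⟨a, haS, haT⟩ := Finset.not_subset.1 hnST
  obtain ⟨b, hbT, hbS⟩ := Finset.not_subset.1 hnTS
  by_cases hout : ∃ w : Fin n, w ∉ S ∧ w ∉ T
  · -- Case 1: some element outside S ∪ T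
    obtain ⟨w, hwS, hwT⟩ := hout
    have haw : a ≠ w := fun h => hwS (h ▸ haS)
    refine ⟨a, w, haw, ?_⟩
    have hIS : identifyBlock a w S = S := if_neg hwS
    have hIT : identifyBlock a w T = T := if_neg hwT
    intro M hM ⟨h1, h2⟩
    rw [hIS] at h1
    rw [hIT] at h2
    by_cases hwM : w ∈ M
    · have : a ∈ identifyBlock a w M := by
        rw [identifyBlock, if_pos hwM]; exact Finset.mem_insert_self a _
      exact haT (h2 this)
    · rw [identifyBlock, if_neg hwM] at h1 h2
      have : M = S := hG M hM S hS h1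
      exact hnST (this ▸ h2)
  · push_neg at hout
    have hunion : ∀ x : Fin n, x ∈ S ∨ x ∈ T := by
      intro x
      by_cases h : x ∈ S
      · exact Or.inl h
      · exact Or.inr (hout x h)
    by_cases hint : ∃ x : Fin n, x ∈ S ∧ x ∈ T
    · obtain ⟨x, hxS, hxT⟩ := hint
      by_cases hSdiff : ∃ a' ∈ S, a' ∉ T ∧ a' ≠ a
      · obtain ⟨a', ha'S, ha'T, ha'a⟩ := hSdiff
        exact badpair_two_diff hG hS hT hxS hxT haS haT ha'S ha'T (Ne.symm ha'a)
      · by_cases hTdiff : ∃ b' ∈ T, b' ∉ S ∧ b' ≠ b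
        · obtain ⟨b', hb'T, hb'S, hb'b⟩ := hTdiff
          obtain ⟨u, v, huv, hnm⟩ :=
            badpair_two_diff hG hT hS hxT hxS hbT hbS hb'T hb'S (Ne.symm hb'b)
          exact ⟨u, v, huv, noMin_symm hnm⟩
        · -- S = univ \ {b}, T = univ \ {a}
          push_neg at hSdiff hTdiff
          have hab : a ≠ b := fun h => haT (h ▸ hbT)
          have hSmem : ∀ y : Fin n, y ≠ b → y ∈ S := by
            intro y hyb
            rcases hunion y with h | h
            · exact h
            · by_cases hyS : y ∈ S
              · exact hyS
              · exact absurd (hTdiff y h hyS) hyb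
          have hTmem : ∀ y : Fin n, y ≠ a → y ∈ T := by
            intro y hya
            rcases hunion y with h | h
            · by_cases hyT : y ∈ T
              · exact hyT
              · exact absurd (hSdiff y h hyT) hya
            · exact h
          have hcompl : 1 < (({a, b} : Finset (Fin n))ᶜ).card := by
            rw [Finset.card_compl]
            have : ({a, b} : Finset (Fin n)).card = 2 := Finset.card_pair hab
            rw [this]
            simp only [Fintype.card_fin]
            omega
          obtain ⟨u, hu, v, hv, huv⟩ := Finset.one_lt_card.1 hcompl
          rw [Finset.mem_compl, Finset.mem_insert, Finset.mem_singleton] at hu hv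
          push_neg at hu hv
          obtain ⟨hua, hub⟩ := hu
          obtain ⟨hva, hvb⟩ := hv
          refine ⟨u, v, huv, ?_⟩
          have hvS : v ∈ S := hSmem v hvb
          have huS : u ∈ S := hSmem u hub
          have hvT : v ∈ T := hTmem v hva
          have hIS : identifyBlock u v S = S.erase v := by
            rw [identifyBlock, if_pos hvS,
              Finset.insert_eq_self.2 (Finset.mem_erase.2 ⟨huv, huS⟩)]
          have hIT : identifyBlock u v T = T.erase v := by
            rw [identifyBlock, if_pos hvT,
              Finset.insert_eq_self.2 (Finset.mem_erase.2 ⟨huv, hTmem u hua⟩)]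
          intro M hM ⟨h1, h2⟩
          rw [hIS] at h1
          rw [hIT] at h2
          by_cases hvM : v ∈ M
          · have haM : a ∉ M := by
              intro haM
              have : a ∈ identifyBlock u v M := by
                rw [identifyBlock, if_pos hvM]
                exact Finset.mem_insert_of_mem (Finset.mem_erase.2 ⟨fun h => hva h.symm, haM⟩)
              exact haT (Finset.mem_of_mem_erase (h2 this))
            have hbM : b ∉ M := by
              intro hbM
              have : b ∈ identifyBlock u v M := by
                rw [identifyBlock, if_pos hvM]
                exact Finset.mem_insert_of_mem (Finset.mem_erase.2 ⟨fun h => hvb h.symm, hbM⟩)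
              exact hbS (Finset.mem_of_mem_erase (h1 this))
            have hMS : M ⊆ S := fun y hy => hSmem y (fun h => hbM (h ▸ hy))
            have : M = S := hG M hM S hS hMS
            exact haM (this ▸ haS)
          · rw [identifyBlock, if_neg hvM] at h1
            have hMS : M ⊆ S := h1.trans (Finset.erase_subset v S)
            have : M = S := hG M hM S hS hMS
            rw [this] at h1
            exact (Finset.notMem_erase v S) (h1 hvS)
    · -- disjoint case
      push_neg at hint
      have hdisj : ∀ x : Fin n, ¬(x ∈ S ∧ x ∈ T) := fun x h => hint x h.1 h.2
      have hcards : 4 ≤ S.card + T.card := by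
        have hsub : (Finset.univ : Finset (Fin n)) ⊆ S ∪ T := by
          intro x _
          rw [Finset.mem_union]
          exact hunion x
        have h1 := Finset.card_le_card hsub
        have h2 := Finset.card_union_le S T
        simp only [Finset.card_univ, Fintype.card_fin] at h1
        omega
      by_cases h2S : 2 ≤ S.card
      · exact badpair_disj hG hS hT hne hdisj h2S
      · have h2T : 2 ≤ T.card := by omega
        obtain ⟨u, v, huv, hnm⟩ :=
          badpair_disj hG hT hS hne (fun x h => hdisj x ⟨h.2, h.1⟩) h2T
        exact ⟨u, v, huv, noMin_symm hnm⟩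

end BadPair

section StructureC
variable {n : ℕ}

lemma structureC {G : Finset (Finset (Fin n))} (hn : 4 ≤ n) (hG : IsSperner G)
    (hdeck : ∀ u v : Fin n, u ≠ v → (starMinor u v G).card = 1) :
    G.card = 1 := by
  have hcardFin : 1 < Fintype.card (Fin n) := by simp only [Fintype.card_fin]; omega
  obtain ⟨u0, v0, hu0v0⟩ := Fintype.exists_pair_of_one_lt_card hcardFin
  -- G is nonempty
  have hGne : G.Nonempty := by
    have h1 : (starMinor u0 v0 G).Nonempty := by
      rw [← Finset.card_pos, hdeck u0 v0 hu0v0]; omega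
    obtain ⟨X, hX⟩ := h1
    rw [starMinor, mem_minimals'] at hX
    have := hX.1
    rw [identifySystem, Finset.mem_image] at this
    obtain ⟨M, hM, -⟩ := this
    exact ⟨M, hM⟩
  by_contra hcard
  have h2 : 1 < G.card := by
    have := Finset.card_pos.2 hGne
    omega
  obtain ⟨S, hS, T, hT, hST⟩ := Finset.one_lt_card.1 h2
  have hne : ∅ ∉ G := by
    intro hemp
    have h1 := hG ∅ hemp S hS (Finset.empty_subset S)
    have h2' := hG ∅ hemp T hT (Finset.empty_subset T)
    exact hST (h1 ▸ h2')
  obtain ⟨u, v, huv, hnm⟩ := badpair hn hG hS hT hST hne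
  obtain ⟨M₀, hM₀⟩ := Finset.card_eq_one.1 (hdeck u v huv)
  have hmin : ∀ X ∈ identifySystem u v G, M₀ ⊆ X :=
    min_subset_of_minimals_eq (by rw [← starMinor]; exact hM₀)
  have hM₀mem : M₀ ∈ identifySystem u v G := by
    have : M₀ ∈ starMinor u v G := by rw [hM₀]; exact Finset.mem_singleton_self M₀
    rw [starMinor, mem_minimals'] at this
    exact this.1
  rw [identifySystem, Finset.mem_image] at hM₀mem
  obtain ⟨M, hM, hMeq⟩ := hM₀mem
  apply hnm M hM
  constructor
  · rw [hMeq]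
    exact hmin _ (by rw [identifySystem, Finset.mem_image]; exact ⟨S, hS, rfl⟩)
  · rw [hMeq]
    exact hmin _ (by rw [identifySystem, Finset.mem_image]; exact ⟨T, hT, rfl⟩)

/-- A bijection of `Fin n` carrying `S` onto `T`, given equal cardinalities. -/
lemma exists_bijOn_image {S T : Finset (Fin n)} (h : S.card = T.card) :
    ∃ σ : Fin n → Fin n,
      Set.BijOn σ ↑(Finset.univ : Finset (Fin n)) ↑(Finset.univ : Finset (Fin n)) ∧
      S.image σ = T := by
  have hcompl : (Sᶜ : Finset (Fin n)).card = (Tᶜ : Finset (Fin n)).card := by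
    rw [Finset.card_compl, Finset.card_compl, h]
  let e1 : {x // x ∈ S} ≃ {x // x ∈ T} := Finset.equivOfCardEq h
  let e2' : {x // x ∈ Sᶜ} ≃ {x // x ∈ Tᶜ} := Finset.equivOfCardEq hcompl
  let e2 : {x : Fin n // ¬x ∈ S} ≃ {x : Fin n // ¬x ∈ T} :=
    (Equiv.subtypeEquivRight (fun x => (Finset.mem_compl (a := x)).symm)).trans
      (e2'.trans (Equiv.subtypeEquivRight (fun x => Finset.mem_compl (a := x))))
  let σ : Fin n ≃ Fin n :=
    ((Equiv.sumCompl (· ∈ S)).symm.trans (e1.sumCongr e2)).trans (Equiv.sumCompl (· ∈ T))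
  refine ⟨σ, ⟨fun x _ => Finset.mem_coe.2 (Finset.mem_univ _),
    σ.injective.injOn, fun y _ => ⟨σ.symm y, Finset.mem_coe.2 (Finset.mem_univ _),
      σ.apply_symm_apply y⟩⟩, ?_⟩
  have hsub : S.image σ ⊆ T := by
    intro y hy
    rw [Finset.mem_image] at hy
    obtain ⟨x, hx, rfl⟩ := hy
    have : σ x = (e1 ⟨x, hx⟩ : Fin n) := by
      simp only [σ, Equiv.trans_apply]
      rw [Equiv.sumCompl_symm_apply_of_pos hx, Equiv.sumCongr_apply, Sum.map_inl,
        Equiv.sumCompl_apply_inl]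
    rw [this]
    exact (e1 ⟨x, hx⟩).2
  apply Finset.eq_of_subset_of_card_le hsub
  rw [Finset.card_image_of_injective S σ.injective, h]

end StructureC

section Support
variable {α : Type*} [DecidableEq α]

lemma eq_image_support {F : Finset (Finset α)} (h : ∀ S ∈ F, S.card = 1) :
    F = (F.biUnion id).image (fun a => ({a} : Finset α)) := by
  ext S
  constructor
  · intro hS
    obtain ⟨a, rfl⟩ := Finset.card_eq_one.1 (h S hS)
    rw [Finset.mem_image]
    exact ⟨a, Finset.mem_biUnion.2 ⟨{a}, hS, Finset.mem_singleton_self a⟩, rfl⟩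
  · intro hS
    rw [Finset.mem_image] at hS
    obtain ⟨a, ha, rfl⟩ := hS
    rw [Finset.mem_biUnion] at ha
    obtain ⟨T, hT, haT⟩ := ha
    obtain ⟨b, rfl⟩ := Finset.card_eq_one.1 (h T hT)
    rw [id, Finset.mem_singleton] at haT
    rw [haT]
    exact hT

end Support


/-- Let `n ≥ 4` and let `𝒜` be a Sperner system over `{1,…,n}` such that either every
block of `𝒜` is a singleton or `𝒜` has exactly one block. Then `𝒜` is reconstructible:
every Sperner system `ℬ` over `{1,…,n}` hypomorphic to `𝒜` is isomorphic to `𝒜`. -/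
theorem statement16 (n : ℕ) (hn : 4 ≤ n) (F : Finset (Finset (Fin n)))
    (hsp : IsSperner F)
    (hshape : (∀ S ∈ F, S.card = 1) ∨ F.card = 1)
    (G : Finset (Finset (Fin n))) (hGsp : IsSperner G)
    (h : Hypomorphic (Finset.univ : Finset (Fin n)) F G) :
    SystemIso (Finset.univ : Finset (Fin n)) F (Finset.univ : Finset (Fin n)) G := by
  rcases hshape with hsing | hone
  · -- Case 1: all blocks of F are singletons
    set W := F.biUnion id with hWdef
    have hFW : F = W.image (fun a => ({a} : Finset (Fin n))) := eq_image_support hsing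
    -- all blocks of every starMinor of G are singletons
    have hGdeckblocks : ∀ u' v' : Fin n, u' ≠ v' → ∀ B ∈ starMinor u' v' G, B.card = 1 := by
      intro u' v' h' B hB
      obtain ⟨u, v, huv, σ, hbij, hiso⟩ := hypo_backward h u' v' h'
      rw [← hiso, Finset.mem_image] at hB
      obtain ⟨X, hX, rfl⟩ := hB
      rw [hFW, starMinor_singletons, Finset.mem_image] at hX
      obtain ⟨a, -, rfl⟩ := hX
      simp
    have hGsing : ∀ B ∈ G, B.card = 1 := structureB hn hGsp hGdeckblocks
    set W' := G.biUnion id with hW'def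
    have hGW : G = W'.image (fun a => ({a} : Finset (Fin n))) := eq_image_support hGsing
    -- deck cardinalities
    have hcF : ∀ u v : Fin n, u ≠ v → (starMinor u v F).card = idc W u v := by
      intro u v huv
      rw [hFW, starMinor_singletons,
        Finset.card_image_of_injective _ Finset.singleton_injective,
        idc_eq_card_identifyBlock huv]
    have hcG : ∀ u v : Fin n, u ≠ v → (starMinor u v G).card = idc W' u v := by
      intro u v huv
      rw [hGW, starMinor_singletons,
        Finset.card_image_of_injective _ Finset.singleton_injective,
        idc_eq_card_identifyBlock huv]
    have h1 : ∀ u v : Fin n, u ≠ v → ∃ u' v', u' ≠ v' ∧ idc W u v = idc W' u' v' := by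
      intro u v huv
      obtain ⟨u', v', h', hiso⟩ := hypo_forward h u v huv
      refine ⟨u', v', h', ?_⟩
      rw [← hcF u v huv, ← hcG u' v' h']
      exact (iso_family_card hiso (starMinor_subset_ground huv)).symm
    have h2 : ∀ u' v' : Fin n, u' ≠ v' → ∃ u v, u ≠ v ∧ idc W u v = idc W' u' v' := by
      intro u' v' h'
      obtain ⟨u, v, huv, hiso⟩ := hypo_backward h u' v' h'
      refine ⟨u, v, huv, ?_⟩
      rw [← hcF u v huv, ← hcG u' v' h']
      exact (iso_family_card hiso (starMinor_subset_ground huv)).symm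
    have hcard : W.card = W'.card := aux_eq hn h1 h2
    obtain ⟨σ, hbij, hWσ⟩ := exists_bijOn_image hcard
    refine ⟨σ, hbij, ?_⟩
    rw [hFW, hGW, ← hWσ, Finset.image_image, Finset.image_image]
    apply Finset.image_congr
    intro a _
    simp
  · -- Case 2: F has exactly one block
    obtain ⟨S, hFS⟩ := Finset.card_eq_one.1 hone
    have hGdeckcard : ∀ u' v' : Fin n, u' ≠ v' → (starMinor u' v' G).card = 1 := by
      intro u' v' h'
      obtain ⟨u, v, huv, σ, hbij, hiso⟩ := hypo_backward h u' v' h'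
      rw [← hiso, hFS, starMinor_single, Finset.image_singleton, Finset.card_singleton]
    have hGone : G.card = 1 := structureC hn hGsp hGdeckcard
    obtain ⟨T, hGT⟩ := Finset.card_eq_one.1 hGone
    have h1 : ∀ u v : Fin n, u ≠ v → ∃ u' v', u' ≠ v' ∧ idc S u v = idc T u' v' := by
      intro u v huv
      obtain ⟨u', v', h', hiso⟩ := hypo_forward h u v huv
      refine ⟨u', v', h', ?_⟩
      have := iso_block_card hiso (starMinor_subset_ground huv)
        (identifyBlock u' v' T) (by rw [hGT, starMinor_single]; exact Finset.mem_singleton_self _)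
      obtain ⟨X, hX, hXcard⟩ := this
      rw [hFS, starMinor_single, Finset.mem_singleton] at hX
      subst hX
      rw [← idc_eq_card_identifyBlock huv, ← idc_eq_card_identifyBlock h', hXcard]
    have h2 : ∀ u' v' : Fin n, u' ≠ v' → ∃ u v, u ≠ v ∧ idc S u v = idc T u' v' := by
      intro u' v' h'
      obtain ⟨u, v, huv, hiso⟩ := hypo_backward h u' v' h'
      refine ⟨u, v, huv, ?_⟩
      have := iso_block_card hiso (starMinor_subset_ground huv)
        (identifyBlock u' v' T) (by rw [hGT, starMinor_single]; exact Finset.mem_singleton_self _)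
      obtain ⟨X, hX, hXcard⟩ := this
      rw [hFS, starMinor_single, Finset.mem_singleton] at hX
      subst hX
      rw [← idc_eq_card_identifyBlock huv, ← idc_eq_card_identifyBlock h', hXcard]
    have hcard : S.card = T.card := aux_eq hn h1 h2
    obtain ⟨σ, hbij, hSσ⟩ := exists_bijOn_image hcard
    refine ⟨σ, hbij, ?_⟩
    rw [hFS, hGT, Finset.image_singleton, hSσ]
end
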